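/- The map f is Li-Yorke chaotic: there exists an uncountable set Γ ⊆ 𝔻 such that every pair of distinct points of Γ is a Li-Yorke chaotic pair for f. -/

import Mathlib

/-- `{x, y}` is a Li-Yorke chaotic pair for `T` if the distances between the iterates
`Tⁿ x` and `Tⁿ y` have positive limsup and zero liminf. -/
def LiYorkePair {X : Type*} [PseudoEMetricSpace X] (T : X → X) (x y : X) : Prop :=
  0 < Filter.limsup (fun n : ℕ => edist (T^[n] x) (T^[n] y)) Filter.atTop ∧
    Filter.liminf (fun n : ℕ => edist (T^[n] x) (T^[n] y)) Filter.atTop = 0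

/-- `T` is Li-Yorke chaotic if there is an uncountable set all of whose pairs of distinct
points are Li-Yorke chaotic pairs for `T`. -/
def LiYorkeChaotic {X : Type*} [PseudoEMetricSpace X] (T : X → X) : Prop :=
  ∃ Γ : Set X, ¬ Γ.Countable ∧ ∀ x ∈ Γ, ∀ y ∈ Γ, x ≠ y → LiYorkePair T x y

/-- The open unit disk in `ℂ`. -/
def unitDisk : Set ℂ := {z : ℂ | ‖z‖ < 1}

/-- The map `f` on the open unit disk. -/
noncomputable def mapF (z : ℂ) : ℂ :=
  if z = 0 then 0 else
    (Real.exp 1 * z / (Real.exp 1 * ‖z‖ - ‖z‖ + 1)) *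
      Complex.exp (2 * Real.pi * Complex.I *
        Real.log (‖z‖ / (1 - ‖z‖)))

/-- The map `F`, the inverse of `f`, on the open unit disk. -/
noncomputable def mapFinv (w : ℂ) : ℂ :=
  if w = 0 then 0 else
    ((Real.exp 1)⁻¹ * w / ((Real.exp 1)⁻¹ * ‖w‖ - ‖w‖ + 1)) *
      Complex.exp (-(2 * Real.pi * Complex.I *
        Real.log (‖w‖ / (1 - ‖w‖))))

/-!
In the coordinates `z = σ(c) · 𝐞(θ)`, with `σ` the sigmoid and `𝐞 θ = exp (2πiθ)`, the map reads
`(c, θ) ↦ (c + 1, θ + c)`. Hence `fⁿ(σ a) = σ(a + n) · 𝐞(n a)`: the moduli of all orbits tend to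
`1`, and for real `a`, `b` the distance between the `n`-th iterates of `σ a` and `σ b` differs
from `dist (gⁿ, 1)`, where `g = 𝐞(a - b)`, by a quantity tending to `0`. In the compact group
`Circle` the powers of `g` return arbitrarily close to `1`, but they converge to `1` only if
`g = 1`, that is, if `a - b` is an integer. So the image under `σ` of the interval `(0, 1)` is an
uncountable scrambled set.
-/

open Filter Topology Real FourierTransform

lemma eq_one_of_tendsto_pow_nhds_one {M : Type*} [Monoid M] [TopologicalSpace M] [ContinuousMul M]
    [T2Space M] {g : M} (h : Tendsto (g ^ ·) atTop (𝓝 1)) : g = 1 := by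
  have hshift : Tendsto (fun n : ℕ => g * g ^ n) atTop (𝓝 1) := by
    simpa only [Function.comp_def, pow_succ'] using h.comp (tendsto_add_atTop_nat 1)
  simpa using tendsto_nhds_unique (h.const_mul g) hshift

lemma exists_tendsto_pow_comp_nhds_one {G : Type*} [Group G] [TopologicalSpace G]
    [IsTopologicalGroup G] [SeqCompactSpace G] (g : G) :
    ∃ ψ : ℕ → ℕ, Tendsto ψ atTop atTop ∧ Tendsto (fun n => g ^ ψ n) atTop (𝓝 1) := by
  obtain ⟨p, φ, hφ, hp⟩ := SeqCompactSpace.tendsto_subseq (fun n : ℕ => g ^ n)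
  have hle : ∀ n, n + φ n ≤ φ (2 * n) := fun n => by simpa [two_mul] using hφ.add_le_nat n n
  -- `g ^ (φ (2n) - φ n) = g ^ φ (2n) * (g ^ φ n)⁻¹ → p * p⁻¹`, and `φ (2n) - φ n ≥ n`.
  refine ⟨fun n => φ (2 * n) - φ n,
    tendsto_atTop_mono (fun n => Nat.le_sub_of_add_le (hle n)) tendsto_id, ?_⟩
  have h2 : Tendsto (fun n => g ^ φ (2 * n)) atTop (𝓝 p) :=
    hp.comp (tendsto_id.const_mul_atTop' two_pos)
  refine (mul_inv_cancel p ▸ h2.mul hp.inv).congr fun n => ?_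
  exact (pow_sub g (le_add_self.trans (hle n))).symm

lemma liYorkePair_of_tendsto_dist_sub_dist_pow {X G : Type*} [PseudoMetricSpace X] [MetricSpace G]
    [Group G] [IsTopologicalGroup G] [SeqCompactSpace G] {T : X → X} {x y : X} {g : G}
    (hg : g ≠ 1) (h : Tendsto (fun n => dist (T^[n] x) (T^[n] y) - dist (g ^ n) 1) atTop (𝓝 0)) :
    LiYorkePair T x y := by
  have hd : (fun n => edist (T^[n] x) (T^[n] y)) =
      fun n => ENNReal.ofReal (dist (T^[n] x) (T^[n] y)) :=
    funext fun n => edist_dist _ _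
  rw [LiYorkePair, hd]
  constructor
  · refine pos_iff_ne_zero.2 fun h0 => hg (eq_one_of_tendsto_pow_nhds_one ?_)
    have hd0 : Tendsto (fun n => dist (T^[n] x) (T^[n] y)) atTop (𝓝 0) := by
      have := (ENNReal.tendsto_toReal ENNReal.zero_ne_top).comp
        (tendsto_of_le_liminf_of_limsup_le bot_le h0.le)
      simpa [Function.comp_def, ENNReal.toReal_ofReal dist_nonneg] using this
    have := hd0.sub h
    simp only [sub_sub_cancel, sub_zero] at this
    exact tendsto_iff_dist_tendsto_zero.2 this
  · obtain ⟨ψ, hψ, hgψ⟩ := exists_tendsto_pow_comp_nhds_one g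
    have hdψ : Tendsto (fun n => dist (T^[ψ n] x) (T^[ψ n] y)) atTop (𝓝 0) := by
      simpa using (h.comp hψ).add (tendsto_iff_dist_tendsto_zero.1 hgψ)
    refine le_antisymm ?_ bot_le
    calc liminf (fun n => ENNReal.ofReal (dist (T^[n] x) (T^[n] y))) atTop
        ≤ liminf (fun n => ENNReal.ofReal (dist (T^[ψ n] x) (T^[ψ n] y))) atTop :=
          hψ.liminf_le_liminf_comp
      _ = 0 := by simpa using (ENNReal.tendsto_ofReal hdψ).liminf_eq

lemma sigmoid_div_one_sub_sigmoid (c : ℝ) : sigmoid c / (1 - sigmoid c) = exp c := by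
  rw [← sigmoid_neg, ← sigmoid_mul_rexp_neg, div_mul_cancel_left₀ (sigmoid_pos c).ne', exp_neg,
    inv_inv]

lemma exp_one_mul_sigmoid_div (c : ℝ) :
    exp 1 * sigmoid c / (exp 1 * sigmoid c - sigmoid c + 1) = sigmoid (c + 1) := by
  have := exp_pos (-c)
  have := exp_pos 1
  rw [sigmoid_def, sigmoid_def, neg_add, exp_add, exp_neg 1]
  field_simp
  rw [div_eq_one_iff_eq (by linarith : (0 : ℝ) < _).ne']
  ring

lemma fourierChar_intCast (n : ℤ) : 𝐞 n = 1 := by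
  rw [fourierChar_apply', Circle.exp_two_pi_mul_int]

lemma fourierChar_eq_one_iff {x : ℝ} : 𝐞 x = 1 ↔ ∃ n : ℤ, x = n := by
  simp [fourierChar_apply', Circle.exp_eq_one, mul_comm _ (2 * π), pi_ne_zero]

lemma norm_sigmoid_mul_fourierChar (c θ : ℝ) : ‖(sigmoid c : ℂ) * 𝐞 θ‖ = sigmoid c := by
  simp [Circle.norm_coe, abs_of_pos (sigmoid_pos c)]

lemma mapF_sigmoid_mul_fourierChar (c θ : ℝ) :
    mapF (sigmoid c * 𝐞 θ) = sigmoid (c + 1) * 𝐞 (θ + c) := by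
  have hne : (sigmoid c : ℂ) * 𝐞 θ ≠ 0 := norm_ne_zero_iff.1 <| by
    rw [norm_sigmoid_mul_fourierChar]; exact (sigmoid_pos c).ne'
  rw [mapF, if_neg hne, norm_sigmoid_mul_fourierChar, sigmoid_div_one_sub_sigmoid, log_exp,
    ← exp_one_mul_sigmoid_div, AddChar.map_add_eq_mul, Circle.coe_mul, fourierChar_apply c]
  push_cast
  ring_nf

lemma iterate_mapF_sigmoid (a : ℝ) (n : ℕ) :
    mapF^[n] (sigmoid a) = sigmoid (a + n) * 𝐞 (n * a) := by
  induction n with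
  | zero => simp
  | succ n ih =>
    rw [Function.iterate_succ_apply', ih, mapF_sigmoid_mul_fourierChar]
    have : n * a + (a + n) = ((n + 1 : ℕ) : ℝ) * a + (n : ℤ) := by push_cast; ring
    rw [this, AddChar.map_add_eq_mul, fourierChar_intCast, mul_one]
    push_cast
    ring_nf

lemma dist_ofReal_mul_circle (r : ℝ) (u : Circle) : dist ((r : ℂ) * u) u = |r - 1| := by
  rw [dist_eq_norm, ← sub_one_mul, norm_mul, Circle.norm_coe, mul_one, ← Complex.ofReal_one,
    ← Complex.ofReal_sub, Complex.norm_real, Real.norm_eq_abs]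

lemma dist_fourierChar_natCast_mul (a b : ℝ) (n : ℕ) :
    dist (𝐞 (n * a) : ℂ) (𝐞 (n * b)) = dist (𝐞 (a - b) ^ n) 1 := by
  have : 𝐞 (n * a) = 𝐞 (a - b) ^ n * 𝐞 (n * b) := by
    rw [← AddChar.map_nsmul_eq_pow, ← AddChar.map_add_eq_mul, nsmul_eq_mul]
    ring_nf
  rw [this, Circle.coe_mul, dist_eq_norm, ← sub_one_mul, norm_mul, Circle.norm_coe, mul_one,
    ← dist_eq_norm]
  rfl

lemma tendsto_dist_iterate_mapF_sub (a b : ℝ) :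
    Tendsto (fun n : ℕ => dist (mapF^[n] (sigmoid a)) (mapF^[n] (sigmoid b)) -
      dist (𝐞 (a - b) ^ n) 1) atTop (𝓝 0) := by
  have hσ : ∀ c : ℝ, Tendsto (fun n : ℕ => |sigmoid (c + n) - 1|) atTop (𝓝 0) := fun c => by
    have := tendsto_sigmoid_atTop.comp
      (tendsto_atTop_add_const_left _ c tendsto_natCast_atTop_atTop)
    simpa using (this.sub_const 1).abs
  refine squeeze_zero_norm (fun n => ?_) (by simpa using (hσ a).add (hσ b))
  rw [iterate_mapF_sigmoid, iterate_mapF_sigmoid, ← dist_fourierChar_natCast_mul,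
    ← dist_ofReal_mul_circle, ← dist_ofReal_mul_circle, ← dist_eq_norm]
  exact dist_dist_dist_le _ _ _ _

lemma fourierChar_ne_one_of_abs_lt_one {x : ℝ} (h0 : x ≠ 0) (h1 : |x| < 1) : 𝐞 x ≠ 1 := by
  rw [Ne, fourierChar_eq_one_iff]
  rintro ⟨n, rfl⟩
  have : |n| < 1 := by exact_mod_cast h1
  have hn : n = 0 := by rw [abs_lt] at this; omega
  exact h0 (by simp [hn])

/-- The map `f` of the open unit disk is Li-Yorke chaotic: there is an uncountable subset of
the disk all of whose pairs of distinct points are Li-Yorke chaotic pairs for `f`. -/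
theorem stmt_18 :
    ∃ Γ : Set ℂ, Γ ⊆ unitDisk ∧ ¬ Γ.Countable ∧
      ∀ x ∈ Γ, ∀ y ∈ Γ, x ≠ y → LiYorkePair mapF x y := by
  refine ⟨(fun c : ℝ => (sigmoid c : ℂ)) '' Set.Ioo 0 1, ?_, ?_, ?_⟩
  · rintro _ ⟨c, -, rfl⟩
    simpa [unitDisk, abs_of_pos (sigmoid_pos c)] using sigmoid_lt_one c
  · refine fun hc => (Cardinal.Real.Ioo_countable_iff.1 ?_).not_gt one_pos
    exact Set.countable_of_injective_of_countable_image
      (Complex.ofReal_injective.comp sigmoid_injective).injOn hc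
  · rintro _ ⟨a, ⟨ha0, ha1⟩, rfl⟩ _ ⟨b, ⟨hb0, hb1⟩, rfl⟩ hab
    have hne : a - b ≠ 0 := sub_ne_zero.2 fun h => hab (h ▸ rfl)
    have hlt : |a - b| < 1 := abs_sub_lt_iff.2 ⟨by linarith, by linarith⟩
    exact liYorkePair_of_tendsto_dist_sub_dist_pow (fourierChar_ne_one_of_abs_lt_one hne hlt)
      (tendsto_dist_iterate_mapF_sub a b)
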